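/- The double integral ∫_0^1 ∫_0^1 t/(1 − st) dt ds equals 1. -/

import Mathlib

/-!
For `0 ≤ s < 1` and `0 < t < 1` the integrand is the geometric series `∑ sⁿ tⁿ⁺¹` with nonnegative
terms, so it may be integrated term by term: the inner integral is `∑ sⁿ / (n + 2)`, and the
outer one is `∑ 1 / ((n + 1)(n + 2))`, which telescopes to `1`.
-/

open MeasureTheory Filter Set Topology

lemma hasSum_sub_succ_of_antitone {f : ℕ → ℝ} {l : ℝ} (hf : Antitone f)
    (hlim : Tendsto f atTop (𝓝 l)) : HasSum (fun n ↦ f n - f (n + 1)) (f 0 - l) := by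
  rw [hasSum_iff_tendsto_nat_of_nonneg fun n ↦ sub_nonneg.2 (hf n.le_succ)]
  simp_rw [Finset.sum_range_sub']
  exact tendsto_const_nhds.sub hlim

lemma hasSum_integral_of_nonneg {α ι : Type*} [MeasurableSpace α] [Countable ι] {μ : Measure α}
    {F : ι → α → ℝ} (hF : ∀ i, Integrable (F i) μ) (hF_nonneg : ∀ i, 0 ≤ᵐ[μ] F i)
    (hsum : Summable fun i ↦ ∫ x, F i x ∂μ) :
    HasSum (fun i ↦ ∫ x, F i x ∂μ) (∫ x, ∑' i, F i x ∂μ) := by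
  refine hasSum_integral_of_summable_integral_norm hF (hsum.congr fun i ↦ ?_)
  exact integral_congr_ae <| (hF_nonneg i).mono fun x hx ↦ (Real.norm_of_nonneg hx).symm

lemma integral_Ioo_zero_one_pow (n : ℕ) : ∫ x in Ioo (0 : ℝ) 1, x ^ n = 1 / (n + 1) := by
  rw [← integral_Ioc_eq_integral_Ioo, ← intervalIntegral.integral_of_le zero_le_one,
    integral_pow]
  simp

lemma hasSum_integral_Ioo_zero_one_mul_pow {a : ℕ → ℝ} {k : ℕ → ℕ} (ha : 0 ≤ a)
    (hsum : Summable fun n ↦ a n / (k n + 1)) :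
    HasSum (fun n ↦ a n / (k n + 1)) (∫ x in Ioo (0 : ℝ) 1, ∑' n, a n * x ^ k n) := by
  have hint (n : ℕ) : ∫ x in Ioo (0 : ℝ) 1, a n * x ^ k n = a n / (k n + 1) := by
    rw [integral_const_mul, integral_Ioo_zero_one_pow, mul_one_div]
  simp_rw [← hint] at hsum ⊢
  refine hasSum_integral_of_nonneg (fun n ↦ ?_) (fun n ↦ ?_) hsum
  · exact (continuous_const.mul (continuous_pow _)).integrableOn_Icc.mono_set Ioo_subset_Icc_self
  · filter_upwards [ae_restrict_mem measurableSet_Ioo] with x hx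
    exact mul_nonneg (ha n) (pow_nonneg hx.1.le _)

lemma tsum_pow_mul_pow_succ {s t : ℝ} (hs : 0 ≤ s) (ht : 0 ≤ t) (hst : s * t < 1) :
    ∑' n : ℕ, s ^ n * t ^ (n + 1) = t / (1 - s * t) := by
  have (n : ℕ) : s ^ n * t ^ (n + 1) = t * (s * t) ^ n := by ring
  simp_rw [this, tsum_mul_left, tsum_geometric_of_lt_one (mul_nonneg hs ht) hst, div_eq_mul_inv]

lemma hasSum_integral_Ioo_div_one_sub_mul {s : ℝ} (hs₀ : 0 ≤ s) (hs₁ : s < 1) :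
    HasSum (fun n : ℕ ↦ s ^ n / (n + 2)) (∫ t in Ioo (0 : ℝ) 1, t / (1 - s * t)) := by
  have hsum : Summable fun n : ℕ ↦ s ^ n / (n + 2) :=
    (summable_geometric_of_lt_one hs₀ hs₁).of_nonneg_of_le (fun n ↦ by positivity)
      fun n ↦ div_le_self (pow_nonneg hs₀ n) (by linarith [n.cast_nonneg (α := ℝ)])
  have key := hasSum_integral_Ioo_zero_one_mul_pow (a := (s ^ ·)) (k := (· + 1))
    (fun n ↦ pow_nonneg hs₀ n) (by push_cast; simpa only [add_assoc, one_add_one_eq_two] using hsum)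
  rw [setIntegral_congr_fun measurableSet_Ioo fun t ht ↦
    (tsum_pow_mul_pow_succ hs₀ ht.1.le (by nlinarith [ht.1, ht.2])).symm]
  push_cast at key
  simpa only [add_assoc, one_add_one_eq_two] using key

lemma hasSum_one_div_succ_mul_succ_succ :
    HasSum (fun n : ℕ ↦ 1 / (((n : ℝ) + 1) * (n + 2))) 1 := by
  have h := hasSum_sub_succ_of_antitone (f := fun n : ℕ ↦ 1 / ((n : ℝ) + 1))
    (fun m n hmn ↦ one_div_le_one_div_of_le (by positivity) (by gcongr))
    tendsto_one_div_add_atTop_nhds_zero_nat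
  convert h using 1
  · ext n
    push_cast
    field_simp
    ring
  · norm_num

theorem stmt14 :
    (∫ s in Set.Ioo (0 : ℝ) 1, ∫ t in Set.Ioo (0 : ℝ) 1, t / (1 - s * t)) = 1 := by
  have hinner (s : ℝ) (hs : s ∈ Ioo (0 : ℝ) 1) :
      ∫ t in Ioo (0 : ℝ) 1, t / (1 - s * t) = ∑' n : ℕ, 1 / ((n : ℝ) + 2) * s ^ n := by
    simp_rw [← (hasSum_integral_Ioo_div_one_sub_mul hs.1.le hs.2).tsum_eq, one_div_mul_eq_div]
  have hcoeff (n : ℕ) : 1 / (((n : ℝ) + 1) * (n + 2)) = 1 / ((n : ℝ) + 2) / (id n + 1) := by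
    rw [div_div, mul_comm, id]
  have houter := hasSum_integral_Ioo_zero_one_mul_pow (a := fun n ↦ 1 / ((n : ℝ) + 2)) (k := id)
    (fun n ↦ by positivity) (hasSum_one_div_succ_mul_succ_succ.summable.congr hcoeff)
  rw [setIntegral_congr_fun measurableSet_Ioo hinner]
  exact houter.unique (hasSum_one_div_succ_mul_succ_succ.congr_fun fun n ↦ (hcoeff n).symm)
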